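/- Let p ∈ (1,2), set κ := (p-1)^{-p}, and let a > 0. Let ψ(·,a) be the function associated with the unique solution f(·,a) of (|f'|^{p-2} f')' + f - |f'|^{p-1} = 0, f(0) = a, f'(0) = 0, via ψ(1-f(r,a)/a, a) = |f'(r,a)|^p/a^p, and define φ(y,a) := ψ(y,a)(1-y)^{-p} for y ∈ [0,1). Then the following four statements are equivalent: (i) φ(y,a) → 0 as y → 1; (ii) sup_{y ∈ [0,1)} φ(y,a) < κ; (iii) the derivative φ'(·,a) vanishes at least once in (0,1); (iv) there exists Y_a ∈ (0,1) such that φ'(Y_a,a) = 0 and φ'(y,a)(y-Y_a) < 0 for all y ∈ (0,1) \ {Y_a}. -/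

import Mathlib

/-!
Multiplied by `1 - y`, the equation of `φ` reads `(1-y) φ' = C (1-y)^{2-p} - p H(φ)` with
`C = p a^{2-p}/(p-1) > 0` and `H(t) = t^{(p-1)/p} (κ^{1/p} - t^{1/p})`, which is positive exactly
on `(0, κ)`. At a zero of `φ'` the right-hand side has derivative `-(2-p) C (1-y)^{1-p} < 0`, so
`φ'` passes from positive to negative values at each of its zeros and vanishes at most once:
(iii) ⇒ (iv). Near `y = 1` the function `φ` cannot stay in an interval `[l, c] ⊂ (0, κ)`, since
there `(1-y) φ' ≤ -m < 0` forces `φ ≤ const + m log(1-y) → -∞`. Beyond the zero of `φ'`, `φ`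
decreases from a value below `κ`, so it tends to `0`: (iii) ⇒ (i). If `φ'` never vanishes it is
positive (as `φ ≥ 0 = φ(0)`), `φ` increases, and a bound `c < κ` traps it in such an interval:
(ii) ⇒ (iii). Finally `φ' > 0` wherever `φ = κ`, so `φ` never returns below `κ` after reaching it;
hence `φ → 0` forces `φ < κ` on `[0,1)`, and compactness gives `sup φ < κ`: (i) ⇒ (ii).
-/

open Set Filter Topology

/-- The extinction "radius" `R = inf{r > 0 : f(r) = 0}`, as an extended real number
(`⊤` when `f` does not vanish on `(0,∞)`). -/
noncomputable def extTime (f : ℝ → ℝ) : EReal :=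
  sInf {x : EReal | ∃ r : ℝ, 0 < r ∧ f r = 0 ∧ x = (r : EReal)}

/-- `f` solves `(|f'|^{p-2} f')' + f - |f'|^{p-1} = 0` on `(0,∞)` with `f(0)=a`, `f'(0)=0`;
`fd` is the derivative of `f` and `gd` the derivative of `|f'|^{p-2} f'`, both continuous
on `[0,∞)`, so that `f ∈ C¹([0,∞))` and `|f'|^{p-2} f' ∈ C¹([0,∞))`. -/
def IsSol (p a : ℝ) (f fd gd : ℝ → ℝ) : Prop :=
  (∀ r ∈ Set.Ici (0:ℝ), HasDerivWithinAt f (fd r) (Set.Ici 0) r) ∧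
  ContinuousOn fd (Set.Ici 0) ∧
  (∀ r ∈ Set.Ici (0:ℝ), HasDerivWithinAt (fun s => |fd s| ^ (p-2) * fd s) (gd r) (Set.Ici 0) r) ∧
  ContinuousOn gd (Set.Ici 0) ∧
  (∀ r ∈ Set.Ioi (0:ℝ), gd r + f r - |fd r| ^ (p-1) = 0) ∧
  f 0 = a ∧ fd 0 = 0

/-- `ψ` is the function associated with `f = f(·,a)` via `ψ(1 - f(r)/a) = |f'(r)|^p/a^p`
for `r ∈ [0,R(a))`. -/
def PsiRel (p a : ℝ) (f fd ψ : ℝ → ℝ) : Prop :=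
  ∀ r : ℝ, 0 ≤ r → (r : EReal) < extTime f → ψ (1 - f r / a) = |fd r| ^ p / a ^ p

/-- `ψ : [0,1) → [0,∞)` is continuously differentiable (with derivative `ψd`), `ψ(0) = 0`,
and `ψ' + (p/(p-1)) ψ^{(p-1)/p} = (p a^{2-p}/(p-1))(1-y)` holds on `(0,1)`. -/
def PsiSol (p a : ℝ) (ψ ψd : ℝ → ℝ) : Prop :=
  (∀ y ∈ Set.Ico (0:ℝ) 1, HasDerivWithinAt ψ (ψd y) (Set.Ico 0 1) y) ∧
  ContinuousOn ψd (Set.Ico 0 1) ∧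
  (∀ y ∈ Set.Ico (0:ℝ) 1, 0 ≤ ψ y) ∧
  ψ 0 = 0 ∧
  (∀ y ∈ Set.Ioo (0:ℝ) 1,
    ψd y + (p/(p-1)) * ψ y ^ ((p-1)/p) = (p * a ^ (2-p) / (p-1)) * (1-y))

theorem HasDerivAt.eventually_neg_right_pos_left {g : ℝ → ℝ} {d z : ℝ} (hg : HasDerivAt g d z)
    (hz : g z = 0) (hd : d < 0) :
    (∀ᶠ y in 𝓝[>] z, g y < 0) ∧ ∀ᶠ y in 𝓝[<] z, 0 < g y := by
  have hslope : ∀ᶠ y in 𝓝[≠] z, g y / (y - z) < 0 := by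
    filter_upwards [(hasDerivAt_iff_tendsto_slope.mp hg).eventually_lt_const hd] with y hy
    simpa [slope_def_field, hz] using hy
  constructor
  · filter_upwards [hslope.filter_mono (nhdsWithin_mono z fun y hy => ne_of_gt hy),
      self_mem_nhdsWithin] with y hy hzy
    simpa using (div_lt_iff₀ (sub_pos.2 hzy)).mp hy
  · filter_upwards [hslope.filter_mono (nhdsWithin_mono z fun y hy => ne_of_lt hy),
      self_mem_nhdsWithin] with y hy hyz
    simpa using (div_lt_iff_of_neg (sub_neg.2 hyz)).mp hy

theorem neg_of_hasDerivAt_neg_at_zeros {g : ℝ → ℝ} {u v : ℝ} (hg : ContinuousOn g (Icc u v))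
    (hu : g u ≤ 0) (hzero : ∀ z ∈ Icc u v, g z = 0 → ∃ d < 0, HasDerivAt g d z) :
    ∀ y ∈ Ioc u v, g y < 0 := by
  have hle : Icc u v ⊆ g ⁻¹' Iic 0 := by
    refine IsClosed.Icc_subset_of_forall_mem_nhdsWithin ?_ hu ?_
    · simpa only [inter_comm] using hg.preimage_isClosed_of_isClosed isClosed_Icc isClosed_Iic
    · rintro x ⟨hx0, hx⟩
      rcases (show g x ≤ 0 from hx0).lt_or_eq with hneg | hzx
      · have hIcc : Icc u v ∈ 𝓝[>] x :=
          mem_of_superset (Ioo_mem_nhdsGT hx.2) fun y hy => ⟨hx.1.trans hy.1.le, hy.2.le⟩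
        filter_upwards [((hg x (Ico_subset_Icc_self hx)).eventually_lt_const hneg).filter_mono
          (nhdsWithin_le_of_mem hIcc)] with y hy
        exact hy.le
      · obtain ⟨d, hd, hgd⟩ := hzero x (Ico_subset_Icc_self hx) hzx
        filter_upwards [(hgd.eventually_neg_right_pos_left hzx hd).1] with y hy
        exact hy.le
  intro y hy
  refine (hle (Ioc_subset_Icc_self hy) : g y ≤ 0).lt_of_ne fun hzy => ?_
  obtain ⟨d, hd, hgd⟩ := hzero y (Ioc_subset_Icc_self hy) hzy
  obtain ⟨x, hxpos, hx⟩ := ((hgd.eventually_neg_right_pos_left hzy hd).2.and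
    (Ioo_mem_nhdsLT hy.1)).exists
  exact (hle ⟨hx.1.le, hx.2.le.trans hy.2⟩ : g x ≤ 0).not_gt hxpos

theorem IsPreconnected.forall_pos_or_forall_neg {s : Set ℝ} {g : ℝ → ℝ} (hs : IsPreconnected s)
    (hg : ContinuousOn g s) (hne : ∀ x ∈ s, g x ≠ 0) :
    (∀ x ∈ s, 0 < g x) ∨ ∀ x ∈ s, g x < 0 := by
  by_contra! h
  obtain ⟨⟨x, hx, hgx⟩, ⟨y, hy, hgy⟩⟩ := h
  obtain ⟨z, hz, hgz⟩ := hs.intermediate_value hx hy hg ⟨hgx, hgy⟩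
  exact hne z hz hgz

theorem exists_lt_forall_le_of_tendsto_nhdsLT {f : ℝ → ℝ} {a b K l : ℝ} (hab : a < b)
    (hf : ContinuousOn f (Ico a b)) (hlt : ∀ x ∈ Ico a b, f x < K)
    (hl : Tendsto f (𝓝[<] b) (𝓝 l)) (hlK : l < K) :
    ∃ c < K, ∀ x ∈ Ico a b, f x ≤ c := by
  obtain ⟨b', hb', htail⟩ := mem_nhdsLT_iff_exists_Ioo_subset.mp
    (hl.eventually_lt_const (left_lt_add_div_two.2 hlK))
  have hab' : max a b' < b := max_lt hab hb'
  obtain ⟨w, hw, hwmax⟩ := isCompact_Icc.exists_isMaxOn (nonempty_Icc.2 (le_max_left a b'))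
    (hf.mono (Icc_subset_Ico_right hab'))
  refine ⟨max (f w) ((l + K) / 2), max_lt (hlt w (Icc_subset_Ico_right hab' hw))
    (add_div_two_lt_right.2 hlK), fun x hx => ?_⟩
  rcases le_or_gt x (max a b') with hxb | hxb
  · exact (hwmax ⟨hx.1, hxb⟩).trans (le_max_left _ _)
  · exact (htail ⟨(le_max_right a b').trans_lt hxb, hx.2⟩ : f x < _).le.trans (le_max_right _ _)

theorem tendsto_log_one_sub_nhdsLT_one : Tendsto (fun y => Real.log (1 - y)) (𝓝[<] 1) atBot := by
  refine Real.tendsto_log_nhdsGT_zero.comp (tendsto_nhdsWithin_iff.2 ⟨?_, ?_⟩)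
  · exact ((continuous_const.sub continuous_id).tendsto' 1 0 (sub_self 1)).mono_left
      nhdsWithin_le_nhds
  · exact eventually_nhdsWithin_of_forall fun _ hy => mem_Ioi.2 (sub_pos.2 hy)

theorem PsiSol.continuousOn {p a : ℝ} {ψ ψd : ℝ → ℝ} (hψ : PsiSol p a ψ ψd) :
    ContinuousOn ψ (Ico 0 1) :=
  fun y hy => (hψ.1 y hy).continuousWithinAt

/-- `kappaGap p t = t^{(p-1)/p} (κ^{1/p} - t^{1/p})` with `κ = (p-1)^{-p}`, the nonlinearity of
the equation for `φ`. -/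
noncomputable def kappaGap (p t : ℝ) : ℝ := (p-1)⁻¹ * t ^ ((p-1)/p) - t

section kappaGap

variable {p t : ℝ}

theorem kappa_rpow_inv (hp : 1 < p) : ((p-1) ^ (-p)) ^ p⁻¹ = (p-1)⁻¹ := by
  rw [← Real.rpow_mul (by linarith), neg_mul, mul_inv_cancel₀ (by positivity), Real.rpow_neg_one]

theorem kappaGap_eq_mul (hp : p ≠ 0) (ht : 0 < t) :
    kappaGap p t = t ^ ((p-1)/p) * ((p-1)⁻¹ - t ^ p⁻¹) := by
  have h : t ^ ((p-1)/p) * t ^ p⁻¹ = t := by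
    rw [← Real.rpow_add ht, show (p-1)/p + p⁻¹ = 1 by field_simp; ring, Real.rpow_one]
  rw [kappaGap, mul_sub, h, mul_comm]

theorem kappaGap_zero (hp : 1 < p) : kappaGap p 0 = 0 := by
  simp [kappaGap, Real.zero_rpow (div_pos (sub_pos.2 hp) (by linarith)).ne']

theorem kappaGap_pos (hp : 1 < p) (ht : 0 < t) (htκ : t < (p-1) ^ (-p)) : 0 < kappaGap p t := by
  rw [kappaGap_eq_mul (by positivity) ht, ← kappa_rpow_inv hp]
  have := Real.rpow_lt_rpow ht.le htκ (inv_pos.2 (by linarith : (0:ℝ) < p))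
  exact mul_pos (Real.rpow_pos_of_pos ht _) (sub_pos.2 this)

theorem kappaGap_nonpos (hp : 1 < p) (htκ : (p-1) ^ (-p) ≤ t) : kappaGap p t ≤ 0 := by
  have hκ : 0 < (p-1) ^ (-p) := Real.rpow_pos_of_pos (by linarith) _
  have ht : 0 < t := hκ.trans_le htκ
  rw [kappaGap_eq_mul (by positivity) ht, ← kappa_rpow_inv hp]
  have := Real.rpow_le_rpow hκ.le htκ (inv_pos.2 (by linarith : (0:ℝ) < p)).le
  exact mul_nonpos_of_nonneg_of_nonpos (Real.rpow_pos_of_pos ht _).le (sub_nonpos.2 this)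

theorem mem_Ioo_of_kappaGap_pos (hp : 1 < p) (ht : 0 ≤ t) (h : 0 < kappaGap p t) :
    t ∈ Ioo 0 ((p-1) ^ (-p)) := by
  refine ⟨ht.lt_of_ne ?_, lt_of_not_ge fun htκ => (kappaGap_nonpos hp htκ).not_gt h⟩
  rintro rfl
  exact (kappaGap_zero hp).not_gt h |>.elim

theorem continuous_kappaGap (hp : 1 < p) : Continuous (kappaGap p) :=
  (continuous_const.mul (Real.continuous_rpow_const
    (div_nonneg (by linarith) (by linarith)))).sub continuous_id

theorem differentiableAt_kappaGap (ht : t ≠ 0) : DifferentiableAt ℝ (kappaGap p) t :=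
  ((Real.differentiableAt_rpow_const_of_ne _ ht).const_mul _).sub differentiableAt_id

theorem exists_pos_le_kappaGap (hp : 1 < p) {l c : ℝ} (hl : 0 < l) (hc : c < (p-1) ^ (-p)) :
    ∃ m > 0, ∀ t ∈ Icc l c, m ≤ kappaGap p t := by
  rcases (Icc l c).eq_empty_or_nonempty with he | hne
  · exact ⟨1, one_pos, by simp [he]⟩
  obtain ⟨t₀, ht₀, hmin⟩ := isCompact_Icc.exists_isMinOn hne (continuous_kappaGap hp).continuousOn
  exact ⟨kappaGap p t₀, kappaGap_pos hp (hl.trans_le ht₀.1) (ht₀.2.trans_lt hc), hmin⟩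

end kappaGap

noncomputable def phi (p : ℝ) (ψ : ℝ → ℝ) (y : ℝ) : ℝ := ψ y * (1-y) ^ (-p)

noncomputable def phiDeriv (p : ℝ) (ψ ψd : ℝ → ℝ) (y : ℝ) : ℝ :=
  ψd y * (1-y) ^ (-p) + p * ψ y * (1-y) ^ (-(p+1))

/-- `(1-y) φ'(y)` expressed through the equation of `φ`. -/
noncomputable def phiRhs (p a : ℝ) (ψ : ℝ → ℝ) (y : ℝ) : ℝ :=
  p * a ^ (2-p) / (p-1) * (1-y) ^ (2-p) - p * kappaGap p (phi p ψ y)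

theorem rhsCoeff_pos {p a : ℝ} (hp : 1 < p) (ha : 0 < a) : 0 < p * a ^ (2-p) / (p-1) :=
  div_pos (mul_pos (by linarith) (Real.rpow_pos_of_pos ha _)) (by linarith)

section profile

variable {p a : ℝ} {ψ ψd : ℝ → ℝ} {y : ℝ}

theorem continuousOn_one_sub_rpow (r : ℝ) : ContinuousOn (fun y : ℝ => (1-y) ^ r) (Ico 0 1) :=
  (continuousOn_const.sub continuousOn_id).rpow_const fun _ hy => Or.inl (sub_pos.2 hy.2).ne'

theorem continuousOn_phi (hψ : PsiSol p a ψ ψd) : ContinuousOn (phi p ψ) (Ico 0 1) :=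
  hψ.continuousOn.mul (continuousOn_one_sub_rpow _)

theorem continuousOn_phiDeriv (hψ : PsiSol p a ψ ψd) : ContinuousOn (phiDeriv p ψ ψd) (Ico 0 1) :=
  (hψ.2.1.mul (continuousOn_one_sub_rpow _)).add
    ((continuousOn_const.mul hψ.continuousOn).mul (continuousOn_one_sub_rpow _))

theorem phi_nonneg (hψ : PsiSol p a ψ ψd) (hy : y ∈ Ico 0 1) : 0 ≤ phi p ψ y :=
  mul_nonneg (hψ.2.2.1 y hy) (Real.rpow_pos_of_pos (sub_pos.2 hy.2) _).le

theorem phi_zero (hψ : PsiSol p a ψ ψd) : phi p ψ 0 = 0 := by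
  simp [phi, hψ.2.2.2.1]

theorem hasDerivAt_phi (hψ : PsiSol p a ψ ψd) (hy : y ∈ Ioo 0 1) :
    HasDerivAt (phi p ψ) (phiDeriv p ψ ψd y) y := by
  have hψy := (hψ.1 y (Ioo_subset_Ico_self hy)).hasDerivAt (Ico_mem_nhds hy.1 hy.2)
  refine (hψy.mul (((hasDerivAt_id' y).const_sub 1).rpow_const (p := -p)
    (Or.inl (sub_pos.2 hy.2).ne'))).congr_deriv ?_
  rw [phiDeriv, show -p - 1 = -(p+1) by ring]
  ring

theorem phiDeriv_mul_one_sub (hp : p ≠ 0) (hψ : PsiSol p a ψ ψd) (hy : y ∈ Ioo 0 1) :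
    phiDeriv p ψ ψd y * (1-y) = phiRhs p a ψ y := by
  set s := 1 - y
  have hs : 0 < s := sub_pos.2 hy.2
  have hode := hψ.2.2.2.2 y hy
  have hφ : phi p ψ y ^ ((p-1)/p) = ψ y ^ ((p-1)/p) * s ^ (1-p) := by
    rw [phi, Real.mul_rpow (hψ.2.2.1 y (Ioo_subset_Ico_self hy)) (Real.rpow_pos_of_pos hs _).le,
      ← Real.rpow_mul hs.le, show -p * ((p-1)/p) = 1-p by field_simp; ring]
  have e1 : s ^ (-p) = s ^ (-(p+1)) * s := by
    rw [← Real.rpow_add_one hs.ne']; ring_nf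
  have e2 : s ^ (1-p) = s ^ (-p) * s := by
    rw [← Real.rpow_add_one hs.ne']; ring_nf
  have e3 : s ^ (2-p) = s ^ (1-p) * s := by
    rw [← Real.rpow_add_one hs.ne']; ring_nf
  rw [phiRhs, kappaGap, hφ, phiDeriv, phi, e3, e2, e1]
  linear_combination (s ^ (-(p+1)) * s ^ 2) * hode

theorem phiDeriv_eq_div (hp : p ≠ 0) (hψ : PsiSol p a ψ ψd) (hy : y ∈ Ioo 0 1) :
    phiDeriv p ψ ψd y = phiRhs p a ψ y / (1-y) :=
  eq_div_of_mul_eq (sub_pos.2 hy.2).ne' (phiDeriv_mul_one_sub hp hψ hy)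

theorem continuousOn_phiRhs (hp : 1 < p) (hψ : PsiSol p a ψ ψd) :
    ContinuousOn (phiRhs p a ψ) (Ico 0 1) :=
  (continuousOn_const.mul (continuousOn_one_sub_rpow _)).sub
    (continuousOn_const.mul ((continuous_kappaGap hp).comp_continuousOn (continuousOn_phi hψ)))

theorem phi_mem_Ioo_of_phiRhs_eq_zero (hp : 1 < p) (ha : 0 < a) (hψ : PsiSol p a ψ ψd)
    (hy : y ∈ Ico 0 1) (h : phiRhs p a ψ y = 0) : phi p ψ y ∈ Ioo 0 ((p-1) ^ (-p)) := by
  refine mem_Ioo_of_kappaGap_pos hp (phi_nonneg hψ hy) ?_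
  have hC := mul_pos (rhsCoeff_pos hp ha) (Real.rpow_pos_of_pos (sub_pos.2 hy.2) (2-p))
  rw [phiRhs] at h
  nlinarith

theorem exists_hasDerivAt_phiRhs_neg (hp : p ∈ Ioo 1 2) (ha : 0 < a) (hψ : PsiSol p a ψ ψd)
    (hy : y ∈ Ioo 0 1) (h : phiRhs p a ψ y = 0) :
    ∃ d < 0, HasDerivAt (phiRhs p a ψ) d y := by
  have hφ := phi_mem_Ioo_of_phiRhs_eq_zero hp.1 ha hψ (Ioo_subset_Ico_self hy) h
  have hφ' : phiDeriv p ψ ψd y = 0 := by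
    rw [phiDeriv_eq_div (by linarith [hp.1]) hψ hy, h, zero_div]
  have hpow := ((hasDerivAt_id' y).const_sub 1).rpow_const (p := 2-p) (Or.inl (sub_pos.2 hy.2).ne')
  have hgap :=
    (differentiableAt_kappaGap (p := p) hφ.1.ne').hasDerivAt.comp y (hasDerivAt_phi hψ hy)
  refine ⟨_, ?_, (hpow.const_mul (p * a ^ (2-p) / (p-1))).sub (hgap.const_mul p)⟩
  rw [hφ', mul_zero, mul_zero, sub_zero]
  have := mul_pos (rhsCoeff_pos hp.1 ha)
    (mul_pos (sub_pos.2 hp.2) (Real.rpow_pos_of_pos (sub_pos.2 hy.2) (2-p-1)))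
  linarith

theorem phiDeriv_mul_sub_neg (hp : p ∈ Ioo 1 2) (ha : 0 < a) (hψ : PsiSol p a ψ ψd)
    {Y : ℝ} (hY : Y ∈ Ioo 0 1) (h0 : phiDeriv p ψ ψd Y = 0) :
    ∀ y ∈ Ioo 0 1, y ≠ Y → phiDeriv p ψ ψd y * (y - Y) < 0 := by
  have hp0 : p ≠ 0 := by linarith [hp.1]
  have hY0 : phiRhs p a ψ Y = 0 := by rw [← phiDeriv_mul_one_sub hp0 hψ hY, h0, zero_mul]
  have hneg : ∀ u ∈ Ioo (0:ℝ) 1, ∀ v < 1, phiRhs p a ψ u ≤ 0 → ∀ y ∈ Ioc u v, phiRhs p a ψ y < 0 :=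
    fun u hu v hv hu0 => neg_of_hasDerivAt_neg_at_zeros
      ((continuousOn_phiRhs hp.1 hψ).mono fun z hz => ⟨hu.1.le.trans hz.1, hz.2.trans_lt hv⟩) hu0
      fun z hz => exists_hasDerivAt_phiRhs_neg hp ha hψ ⟨hu.1.trans_le hz.1, hz.2.trans_lt hv⟩
  intro y hy hyY
  rw [phiDeriv_eq_div hp0 hψ hy]
  rcases hyY.lt_or_gt with hlt | hgt
  · have hpos : 0 < phiRhs p a ψ y := lt_of_not_ge fun hle =>
      (hneg y hy Y hY.2 hle Y ⟨hlt, le_rfl⟩).ne hY0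
    exact mul_neg_of_pos_of_neg (div_pos hpos (sub_pos.2 hy.2)) (sub_neg.2 hlt)
  · exact mul_neg_of_neg_of_pos
      (div_neg_of_neg_of_pos (hneg Y hY y hy.2 hY0.le y ⟨hgt, le_rfl⟩) (sub_pos.2 hy.2))
      (sub_pos.2 hgt)

theorem phi_lt_kappa_of_tendsto (hp : 1 < p) (ha : 0 < a) (hψ : PsiSol p a ψ ψd)
    (hi : Tendsto (phi p ψ) (𝓝[<] 1) (𝓝 0)) : ∀ y ∈ Ico 0 1, phi p ψ y < (p-1) ^ (-p) := by
  set κ := (p-1) ^ (-p)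
  have hκ : 0 < κ := Real.rpow_pos_of_pos (by linarith) _
  intro y₀ hy₀
  by_contra! hge
  have habove : ∀ y ∈ Ioo y₀ 1, κ < phi p ψ y := by
    intro y hy
    have hsub : Icc y₀ y ⊆ Ico 0 1 := fun z hz => ⟨hy₀.1.trans hz.1, hz.2.trans_lt hy.2⟩
    refine sub_neg.1 <| neg_of_hasDerivAt_neg_at_zeros (g := fun x => κ - phi p ψ x)
      (continuousOn_const.sub ((continuousOn_phi hψ).mono hsub)) (sub_nonpos.2 hge) ?_ y
      ⟨hy.1, le_rfl⟩
    intro z hz hzκ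
    have hφz : phi p ψ z = κ := (sub_eq_zero.1 hzκ).symm
    have hz0 : z ≠ 0 := by rintro rfl; exact hκ.ne' (hφz.symm.trans (phi_zero hψ))
    have hzI : z ∈ Ioo 0 1 := ⟨(hsub hz).1.lt_of_ne' hz0, (hsub hz).2⟩
    have hrhs : 0 < phiRhs p a ψ z := by
      have := mul_pos (rhsCoeff_pos hp ha) (Real.rpow_pos_of_pos (sub_pos.2 hzI.2) (2-p))
      have := mul_nonpos_of_nonneg_of_nonpos (by linarith : (0:ℝ) ≤ p) (kappaGap_nonpos hp hφz.ge)
      rw [phiRhs]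
      linarith
    refine ⟨_, neg_neg_of_pos ?_, (hasDerivAt_phi hψ hzI).const_sub κ⟩
    rw [phiDeriv_eq_div (by linarith) hψ hzI]
    exact div_pos hrhs (sub_pos.2 hzI.2)
  obtain ⟨y, hyκ, hy⟩ := ((hi.eventually_lt_const hκ).and (Ioo_mem_nhdsLT hy₀.2)).exists
  exact (habove y hy).not_gt hyκ

theorem exists_lt_kappa_forall_phi_le (hp : 1 < p) (ha : 0 < a) (hψ : PsiSol p a ψ ψd)
    (hi : Tendsto (phi p ψ) (𝓝[<] 1) (𝓝 0)) :
    ∃ c < (p-1) ^ (-p), ∀ y ∈ Ico 0 1, phi p ψ y ≤ c :=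
  exists_lt_forall_le_of_tendsto_nhdsLT zero_lt_one (continuousOn_phi hψ)
    (phi_lt_kappa_of_tendsto hp ha hψ hi) hi (Real.rpow_pos_of_pos (by linarith) _)

theorem eventually_phiRhs_le_neg (hp : p ∈ Ioo 1 2) {l c : ℝ} (hl : 0 < l)
    (hc : c < (p-1) ^ (-p)) :
    ∃ m > 0, ∀ᶠ y in 𝓝[<] 1, phi p ψ y ∈ Icc l c → phiRhs p a ψ y ≤ -m := by
  obtain ⟨m, hm, hgap⟩ := exists_pos_le_kappaGap hp.1 hl hc
  have hp0 : 0 < p := by linarith [hp.1]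
  have hlim : Tendsto (fun y : ℝ => p * a ^ (2-p) / (p-1) * (1-y) ^ (2-p)) (𝓝[<] 1) (𝓝 0) := by
    have hcont : Continuous fun y : ℝ => p * a ^ (2-p) / (p-1) * (1-y) ^ (2-p) :=
      continuous_const.mul ((continuous_const.sub continuous_id).rpow_const
        fun _ => Or.inr (by linarith [hp.2]))
    simpa [Real.zero_rpow (by linarith [hp.2] : (2:ℝ) - p ≠ 0)] using
      (hcont.tendsto 1).mono_left nhdsWithin_le_nhds
  refine ⟨p * m / 2, by positivity, ?_⟩
  filter_upwards [hlim.eventually_lt_const (by positivity : (0:ℝ) < p * m / 2)] with y hy hφ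
  have := mul_le_mul_of_nonneg_left (hgap _ hφ) hp0.le
  rw [phiRhs]
  linarith

theorem not_eventually_phi_mem_Icc (hp : p ∈ Ioo 1 2) (hψ : PsiSol p a ψ ψd) {l c : ℝ}
    (hl : 0 < l) (hc : c < (p-1) ^ (-p)) : ¬ ∀ᶠ y in 𝓝[<] 1, phi p ψ y ∈ Icc l c := by
  intro hev
  obtain ⟨m, hm, hrhs⟩ := eventually_phiRhs_le_neg (a := a) hp hl hc
  obtain ⟨y₀, hy₀, hsub⟩ := mem_nhdsLT_iff_exists_Ioo_subset.mp
    ((hev.and hrhs).and (Ioo_mem_nhdsLT zero_lt_one))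
  have hsub' : ∀ y ∈ Ioo y₀ 1, y ∈ Ioo 0 1 ∧ phi p ψ y ∈ Icc l c ∧ phiRhs p a ψ y ≤ -m :=
    fun y hy => ⟨(hsub hy).2, (hsub hy).1.1, (hsub hy).1.2 (hsub hy).1.1⟩
  -- `φ' ≤ -m/(1-y)`, so `φ - m log(1-y)` decreases while `m log(1-y) → -∞`.
  set G := fun y => phi p ψ y - m * Real.log (1 - y)
  have hG : ∀ y ∈ Ioo y₀ 1, HasDerivAt G (phiDeriv p ψ ψd y - m * (-1 / (1 - y))) y :=
    fun y hy => (hasDerivAt_phi hψ (hsub' y hy).1).sub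
      ((((hasDerivAt_id' y).const_sub 1).log (sub_pos.2 hy.2).ne').const_mul m)
  have hanti : AntitoneOn G (Ioo y₀ 1) := by
    refine antitoneOn_of_deriv_nonpos (convex_Ioo y₀ 1)
      (fun y hy => (hG y hy).continuousAt.continuousWithinAt)
      (by rw [interior_Ioo]; exact fun y hy => (hG y hy).differentiableAt.differentiableWithinAt)
      fun y hy => ?_
    rw [interior_Ioo] at hy
    have hle := div_le_div_of_nonneg_right (hsub' y hy).2.2 (sub_pos.2 hy.2).le
    rw [(hG y hy).deriv, phiDeriv_eq_div (by linarith [hp.1]) hψ (hsub' y hy).1]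
    linarith [show m * (-1 / (1 - y)) = -m / (1 - y) by ring]
  obtain ⟨y₁, hy₁⟩ := nonempty_Ioo.2 (mem_Iio.1 hy₀)
  obtain ⟨y, hyneg, hy⟩ := (((tendsto_atBot_add_const_left _ (G y₁)
    (tendsto_log_one_sub_nhdsLT_one.const_mul_atBot hm)).eventually_lt_atBot 0).and
    (Ioo_mem_nhdsLT hy₁.2)).exists
  have hGy : G y ≤ G y₁ := hanti hy₁ ⟨hy₁.1.trans hy.1, hy.2⟩ hy.1.le
  have hφ := (hsub' y ⟨hy₁.1.trans hy.1, hy.2⟩).2.1.1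
  simp only [G] at hGy hyneg
  linarith

theorem strictMonoOn_phi (hψ : PsiSol p a ψ ψd) {b : ℝ} (hb : 0 ≤ b)
    (h : ∀ y ∈ Ioo b 1, 0 < phiDeriv p ψ ψd y) : StrictMonoOn (phi p ψ) (Ico b 1) :=
  strictMonoOn_of_deriv_pos (convex_Ico b 1) ((continuousOn_phi hψ).mono (Ico_subset_Ico_left hb))
    fun y hy => by
      rw [interior_Ico] at hy
      rw [(hasDerivAt_phi hψ ⟨hb.trans_lt hy.1, hy.2⟩).deriv]
      exact h y hy

theorem strictAntiOn_phi (hψ : PsiSol p a ψ ψd) {b : ℝ} (hb : 0 ≤ b)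
    (h : ∀ y ∈ Ioo b 1, phiDeriv p ψ ψd y < 0) : StrictAntiOn (phi p ψ) (Ico b 1) :=
  strictAntiOn_of_deriv_neg (convex_Ico b 1) ((continuousOn_phi hψ).mono (Ico_subset_Ico_left hb))
    fun y hy => by
      rw [interior_Ico] at hy
      rw [(hasDerivAt_phi hψ ⟨hb.trans_lt hy.1, hy.2⟩).deriv]
      exact h y hy

theorem tendsto_phi_of_phiDeriv_eq_zero (hp : p ∈ Ioo 1 2) (ha : 0 < a) (hψ : PsiSol p a ψ ψd)
    {Y : ℝ} (hY : Y ∈ Ioo 0 1) (h0 : phiDeriv p ψ ψd Y = 0) :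
    Tendsto (phi p ψ) (𝓝[<] 1) (𝓝 0) := by
  have hanti := strictAntiOn_phi hψ hY.1.le fun y hy =>
    neg_of_mul_neg_left (phiDeriv_mul_sub_neg hp ha hψ hY h0 y ⟨hY.1.trans hy.1, hy.2⟩ hy.1.ne')
      (sub_pos.2 hy.1).le
  have hYκ := (phi_mem_Ioo_of_phiRhs_eq_zero hp.1 ha hψ (Ioo_subset_Ico_self hY)
    (by rw [← phiDeriv_mul_one_sub (by linarith [hp.1]) hψ hY, h0, zero_mul])).2
  refine tendsto_order.2 ⟨fun b hb => ?_, fun ε hε => ?_⟩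
  · filter_upwards [Ioo_mem_nhdsLT zero_lt_one] with y hy
    exact hb.trans_le (phi_nonneg hψ (Ioo_subset_Ico_self hy))
  by_contra hnot
  have hge : ∀ y ∈ Ico Y 1, ε ≤ phi p ψ y := fun y hy => not_lt.1 fun hlt => hnot <| by
    filter_upwards [Ioo_mem_nhdsLT hy.2] with x hx
    exact (hanti hy ⟨hy.1.trans hx.1.le, hx.2⟩ hx.1).trans hlt
  refine not_eventually_phi_mem_Icc hp hψ hε hYκ ?_
  filter_upwards [Ioo_mem_nhdsLT hY.2] with y hy
  exact ⟨hge y ⟨hy.1.le, hy.2⟩, hanti.antitoneOn ⟨le_rfl, hY.2⟩ ⟨hy.1.le, hy.2⟩ hy.1.le⟩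

theorem exists_phiDeriv_eq_zero (hp : p ∈ Ioo 1 2) (hψ : PsiSol p a ψ ψd) {c : ℝ}
    (hc : c < (p-1) ^ (-p)) (hbound : ∀ y ∈ Ico 0 1, phi p ψ y ≤ c) :
    ∃ y ∈ Ioo 0 1, phiDeriv p ψ ψd y = 0 := by
  by_contra! hne
  have hhalf : (1/2 : ℝ) ∈ Ioo 0 1 := by norm_num
  rcases isPreconnected_Ioo.forall_pos_or_forall_neg
    ((continuousOn_phiDeriv hψ).mono Ioo_subset_Ico_self) hne with hpos | hneg
  · have hmono := strictMonoOn_phi hψ le_rfl hpos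
    have hl : 0 < phi p ψ (1/2) := phi_zero hψ ▸
      hmono ⟨le_rfl, one_pos⟩ (Ioo_subset_Ico_self hhalf) hhalf.1
    refine not_eventually_phi_mem_Icc hp hψ hl hc ?_
    filter_upwards [Ioo_mem_nhdsLT hhalf.2] with y hy
    exact ⟨(hmono (Ioo_subset_Ico_self hhalf) ⟨hhalf.1.le.trans hy.1.le, hy.2⟩ hy.1).le,
      hbound y ⟨hhalf.1.le.trans hy.1.le, hy.2⟩⟩
  · have := strictAntiOn_phi hψ le_rfl hneg ⟨le_rfl, one_pos⟩ (Ioo_subset_Ico_self hhalf) hhalf.1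
    rw [phi_zero hψ] at this
    exact (phi_nonneg hψ (Ioo_subset_Ico_self hhalf)).not_gt this

end profile

theorem stmt11 (p a : ℝ) (hp : p ∈ Set.Ioo (1:ℝ) 2) (ha : 0 < a)
    (ψ ψd : ℝ → ℝ) (hψ : PsiSol p a ψ ψd) :
    (Tendsto (fun y => ψ y * (1-y) ^ (-p)) (𝓝[<] (1:ℝ)) (𝓝 0) ↔
      ∃ c : ℝ, c < (p-1) ^ (-p) ∧ ∀ y ∈ Set.Ico (0:ℝ) 1, ψ y * (1-y) ^ (-p) ≤ c) ∧
    (Tendsto (fun y => ψ y * (1-y) ^ (-p)) (𝓝[<] (1:ℝ)) (𝓝 0) ↔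
      ∃ y ∈ Set.Ioo (0:ℝ) 1, ψd y * (1-y) ^ (-p) + p * ψ y * (1-y) ^ (-(p+1)) = 0) ∧
    (Tendsto (fun y => ψ y * (1-y) ^ (-p)) (𝓝[<] (1:ℝ)) (𝓝 0) ↔
      ∃ Ya ∈ Set.Ioo (0:ℝ) 1,
        ψd Ya * (1-Ya) ^ (-p) + p * ψ Ya * (1-Ya) ^ (-(p+1)) = 0 ∧
        ∀ y ∈ Set.Ioo (0:ℝ) 1, y ≠ Ya →
          (ψd y * (1-y) ^ (-p) + p * ψ y * (1-y) ^ (-(p+1))) * (y - Ya) < 0) := by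
  have i_ii : Tendsto (phi p ψ) (𝓝[<] 1) (𝓝 0) →
      ∃ c < (p-1) ^ (-p), ∀ y ∈ Ico 0 1, phi p ψ y ≤ c :=
    exists_lt_kappa_forall_phi_le hp.1 ha hψ
  have ii_iii : (∃ c < (p-1) ^ (-p), ∀ y ∈ Ico 0 1, phi p ψ y ≤ c) →
      ∃ y ∈ Ioo 0 1, phiDeriv p ψ ψd y = 0 :=
    fun ⟨_, hc, hbound⟩ => exists_phiDeriv_eq_zero hp hψ hc hbound
  have iii_i : (∃ y ∈ Ioo 0 1, phiDeriv p ψ ψd y = 0) → Tendsto (phi p ψ) (𝓝[<] 1) (𝓝 0) :=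
    fun ⟨_, hY, h0⟩ => tendsto_phi_of_phiDeriv_eq_zero hp ha hψ hY h0
  refine ⟨⟨i_ii, iii_i ∘ ii_iii⟩, ⟨ii_iii ∘ i_ii, iii_i⟩,
    ⟨fun hi => ?_, fun ⟨Y, hY, h0, _⟩ => iii_i ⟨Y, hY, h0⟩⟩⟩
  obtain ⟨Y, hY, h0⟩ := ii_iii (i_ii hi)
  exact ⟨Y, hY, h0, phiDeriv_mul_sub_neg hp ha hψ hY h0⟩
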